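/- arXiv:2410.23620 — 2 statements merged into one kernel-verified Lean document; each statement's English description precedes it below -/
import Mathlib

section
/- In the Gaussian additive-noise structural causal model over a DAG, if k and l are two distinct leaf nodes, then the cross second derivative of the log-density vanishes identically: ∂²/(∂z_k ∂z_l) log p(z) = 0 for all z. -/
/-!
Up to an additive constant, `log p z = -∑ i, (z i - f i z) ^ 2 / (2 σ i ^ 2)`. As `l` is a leaf, no
`f i` depends on `z l`, so `∂_l log p z = -(z l - f l z) / σ l ^ 2`; as `k` is a leaf too,
`k ∉ pa l`, and this score does not depend on `z k`.
-/

theorem fderiv_apply_eq_zero_of_forall_eq {ι 𝕜 F : Type*} [Fintype ι] [NontriviallyNormedField 𝕜]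
    [NormedAddCommGroup F] [NormedSpace 𝕜 F] {g : (ι → 𝕜) → F} {S : Finset ι}
    (hg : ∀ z z' : ι → 𝕜, (∀ j ∈ S, z j = z' j) → g z = g z') (y : ι → 𝕜) {v : ι → 𝕜}
    (hv : ∀ j ∈ S, v j = 0) :
    fderiv 𝕜 g y v = 0 := by
  by_cases hd : DifferentiableAt 𝕜 g y
  · have hline : (fun t : 𝕜 => g (y + t • v)) = fun _ => g y :=
      funext fun t => hg _ _ fun j hj => by simp [hv j hj]
    rw [← hd.lineDeriv_eq_fderiv, lineDeriv, hline, deriv_const]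
  · simp [fderiv_zero_of_not_differentiableAt hd]

theorem fderiv_apply_single_eq_zero_of_forall_eq {ι 𝕜 F : Type*} [Fintype ι] [DecidableEq ι]
    [NontriviallyNormedField 𝕜] [NormedAddCommGroup F] [NormedSpace 𝕜 F] {g : (ι → 𝕜) → F}
    {S : Finset ι} (hg : ∀ z z' : ι → 𝕜, (∀ j ∈ S, z j = z' j) → g z = g z') (y : ι → 𝕜)
    {l : ι} (hl : l ∉ S) :
    fderiv 𝕜 g y (Pi.single l 1) = 0 :=
  fderiv_apply_eq_zero_of_forall_eq hg y fun _ hj =>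
    Pi.single_eq_of_ne (ne_of_mem_of_not_mem hj hl) _

theorem log_gaussian_pdf {σ : ℝ} (hσ : σ ≠ 0) (x : ℝ) :
    Real.log ((Real.sqrt (2 * Real.pi * σ ^ 2))⁻¹ * Real.exp (-x ^ 2 / (2 * σ ^ 2))) =
      -Real.log (Real.sqrt (2 * Real.pi * σ ^ 2)) - x ^ 2 / (2 * σ ^ 2) := by
  have hs : Real.sqrt (2 * Real.pi * σ ^ 2) ≠ 0 := (Real.sqrt_pos.mpr (by positivity)).ne'
  rw [Real.log_mul (inv_ne_zero hs) (Real.exp_ne_zero _), Real.log_exp, Real.log_inv]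
  ring

theorem hasFDerivAt_apply_sub {ι : Type*} [Fintype ι] {g : (ι → ℝ) → ℝ} {w : ι → ℝ}
    (hg : DifferentiableAt ℝ g w) (i : ι) :
    HasFDerivAt (fun y : ι → ℝ => y i - g y) (ContinuousLinearMap.proj i - fderiv ℝ g w) w :=
  (ContinuousLinearMap.proj i).hasFDerivAt.sub hg.hasFDerivAt

section GaussianSCM

variable {n : ℕ} {f : Fin n → (Fin n → ℝ) → ℝ} {σ : Fin n → ℝ}

variable (f σ) in
noncomputable def gaussianANMDensity (z : Fin n → ℝ) : ℝ :=
  ∏ i, (Real.sqrt (2 * Real.pi * σ i ^ 2))⁻¹ * Real.exp (-(z i - f i z) ^ 2 / (2 * σ i ^ 2))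

theorem log_gaussianANMDensity_eq_sum (hσ : ∀ i, σ i ≠ 0) :
    (fun y => Real.log (gaussianANMDensity f σ y)) = fun y => ∑ i,
      (-Real.log (Real.sqrt (2 * Real.pi * σ i ^ 2)) - (y i - f i y) ^ 2 * (2 * σ i ^ 2)⁻¹) := by
  funext y
  rw [gaussianANMDensity, Real.log_prod fun i _ => ?_]
  · exact Finset.sum_congr rfl fun i _ => (log_gaussian_pdf (hσ i) _).trans (by ring)
  · have hs : Real.sqrt (2 * Real.pi * σ i ^ 2) ≠ 0 :=
      (Real.sqrt_pos.mpr (by have := hσ i; positivity)).ne'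
    exact mul_ne_zero (inv_ne_zero hs) (Real.exp_ne_zero _)

theorem fderiv_log_gaussianANMDensity_apply (hσ : ∀ i, σ i ≠ 0)
    {w : Fin n → ℝ} (hf : ∀ i, DifferentiableAt ℝ (f i) w) (v : Fin n → ℝ) :
    fderiv ℝ (fun y => Real.log (gaussianANMDensity f σ y)) w v =
      -∑ i, (w i - f i w) / σ i ^ 2 * (v i - fderiv ℝ (f i) w v) := by
  have hterm := fun i (_ : i ∈ Finset.univ) =>
    (((hasFDerivAt_apply_sub (hf i) i).pow 2).mul_const (2 * σ i ^ 2)⁻¹).const_sub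
      (-Real.log (Real.sqrt (2 * Real.pi * σ i ^ 2)))
  rw [log_gaussianANMDensity_eq_sum hσ, (HasFDerivAt.fun_sum hterm).fderiv, sum_apply,
    ← Finset.sum_neg_distrib]
  refine Finset.sum_congr rfl fun i _ => ?_
  simp only [neg_apply, smul_apply, sub_apply, ContinuousLinearMap.proj_apply, smul_eq_mul,
    nsmul_eq_mul]
  field_simp [hσ i]
  ring

theorem fderiv_log_gaussianANMDensity_apply_single_of_leaf (hσ : ∀ i, σ i ≠ 0)
    {w : Fin n → ℝ} (hf : ∀ i, DifferentiableAt ℝ (f i) w) {pa : Fin n → Finset (Fin n)}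
    (hf_pa : ∀ i, ∀ z z' : Fin n → ℝ, (∀ j ∈ pa i, z j = z' j) → f i z = f i z')
    {l : Fin n} (hleaf : ∀ i, l ∉ pa i) :
    fderiv ℝ (fun y => Real.log (gaussianANMDensity f σ y)) w (Pi.single l 1) =
      -(w l - f l w) / σ l ^ 2 := by
  have hfl : ∀ i, fderiv ℝ (f i) w (Pi.single l 1) = 0 := fun i =>
    fderiv_apply_single_eq_zero_of_forall_eq (hf_pa i) w (hleaf i)
  rw [fderiv_log_gaussianANMDensity_apply hσ hf, Finset.sum_eq_single l]
  · rw [Pi.single_eq_same, hfl, sub_zero, mul_one, neg_div]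
  · intro i _ hil
    simp [hfl, hil]
  · simp

end GaussianSCM

theorem stmt_13_general {n : ℕ}
    (pa : Fin n → Finset (Fin n))        -- parents in the DAG
    (f : Fin n → (Fin n → ℝ) → ℝ)
    (hf_smooth : ∀ i, ContDiff ℝ 2 (f i))
    (hf_pa : ∀ i, ∀ z z' : Fin n → ℝ, (∀ j ∈ pa i, z j = z' j) → f i z = f i z')
    (σ : Fin n → ℝ) (hσ : ∀ i, 0 < σ i)
    (p : (Fin n → ℝ) → ℝ)
    (hp : ∀ z, p z = ∏ i, (Real.sqrt (2 * Real.pi * (σ i) ^ 2))⁻¹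
        * Real.exp (-(z i - f i z) ^ 2 / (2 * (σ i) ^ 2)))
    (k l : Fin n) (hkl : k ≠ l)
    (hleafk : ∀ i, k ∉ pa i) (hleafl : ∀ i, l ∉ pa i) :
    ∀ z : Fin n → ℝ,
      fderiv ℝ (fun w => fderiv ℝ (fun y => Real.log (p y)) w (Pi.single l 1)) z
        (Pi.single k 1) = 0 := by
  obtain rfl : p = gaussianANMDensity f σ := funext hp
  intro z
  have hf : ∀ i, Differentiable ℝ (f i) := fun i => (hf_smooth i).differentiable two_ne_zero
  have hscore :
      (fun w => fderiv ℝ (fun y => Real.log (gaussianANMDensity f σ y)) w (Pi.single l 1)) =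
        fun w => -(w l - f l w) * (σ l ^ 2)⁻¹ := funext fun w => by
    rw [fderiv_log_gaussianANMDensity_apply_single_of_leaf (fun i => (hσ i).ne')
      (fun i => hf i w) hf_pa hleafl, div_eq_mul_inv]
  have hfk : fderiv ℝ (f l) z (Pi.single k 1) = 0 :=
    fderiv_apply_single_eq_zero_of_forall_eq (hf_pa l) z (hleafk l)
  rw [hscore, ((hasFDerivAt_apply_sub (hf l z) l).fun_neg.mul_const _).fderiv]
  simp [hfk, hkl.symm]

/-- In a Gaussian additive-noise structural causal model over a DAG, for two
distinct leaf nodes `k` and `l` the cross second derivative of the log-density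
vanishes identically: `∂²/(∂z_k ∂z_l) log p(z) = 0` for all `z`. -/
theorem stmt_13 {n : ℕ}
    (pa : Fin n → Finset (Fin n))        -- parents in the DAG
    (ord : Fin n → ℕ)                    -- topological order witnessing acyclicity
    (hacyc : ∀ i, ∀ j ∈ pa i, ord j < ord i)
    (f : Fin n → (Fin n → ℝ) → ℝ)
    (hf_smooth : ∀ i, ContDiff ℝ 2 (f i))
    (hf_pa : ∀ i, ∀ z z' : Fin n → ℝ, (∀ j ∈ pa i, z j = z' j) → f i z = f i z')
    (σ : Fin n → ℝ) (hσ : ∀ i, 0 < σ i)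
    (p : (Fin n → ℝ) → ℝ)
    (hp : ∀ z, p z = ∏ i, (Real.sqrt (2 * Real.pi * (σ i) ^ 2))⁻¹
        * Real.exp (-(z i - f i z) ^ 2 / (2 * (σ i) ^ 2)))
    (k l : Fin n) (hkl : k ≠ l)
    (hleafk : ∀ i, k ∉ pa i) (hleafl : ∀ i, l ∉ pa i) :
    ∀ z : Fin n → ℝ,
      fderiv ℝ (fun w => fderiv ℝ (fun y => Real.log (p y)) w (Pi.single l 1)) z
        (Pi.single k 1) = 0 :=
  stmt_13_general pa f hf_smooth hf_pa σ hσ p hp k l hkl hleafk hleafl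
end

section
/- In the Gaussian additive-noise structural causal model, if k is a leaf node of the DAG G, then the k-th diagonal entry of the Hessian of the log-density is the constant −1/σ_k²; in particular, Var(∂²/∂z_k² log p(Z)) = 0. -/
open BigOperators Real MeasureTheory ProbabilityTheory

/-!
Since `k` is a leaf, no `f i` depends on `z_k`, so along the line `z + t e_k` the log-density
is `const - (z_k - f_k(z) + t)² / (2σ_k²)`: a quadratic in `t` with leading coefficient
`-1/(2σ_k²)` independent of `z`. Two directional derivatives along `e_k` therefore give the
constant `-1/σ_k²`, whose variance vanishes.
-/

theorem fderiv_apply_eq_of_hasDerivAt_line {E F : Type*}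
    [NormedAddCommGroup E] [NormedSpace ℝ E] [NormedAddCommGroup F] [NormedSpace ℝ F]
    {g : E → F} {w v : E} {φ : ℝ → F} {φ' : F}
    (hg : DifferentiableAt ℝ g w) (hline : ∀ t : ℝ, g (w + t • v) = φ t)
    (hφ : HasDerivAt φ φ' 0) : fderiv ℝ g w v = φ' := by
  rw [← hg.lineDeriv_eq_fderiv, lineDeriv, funext hline, hφ.deriv]

theorem apply_add_smul_single_eq_of_notMem {ι β : Type*} [DecidableEq ι] {s : Finset ι}
    {g : (ι → ℝ) → β} (hg : ∀ z z' : ι → ℝ, (∀ j ∈ s, z j = z' j) → g z = g z')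
    {k : ι} (hk : k ∉ s) (w : ι → ℝ) (t : ℝ) : g (w + t • Pi.single k 1) = g w :=
  hg _ _ fun j hj => by simp [ne_of_mem_of_not_mem hj hk]

theorem log_prod_gaussian_density {ι : Type*} [Fintype ι] {σ : ι → ℝ}
    (hσ : ∀ i, σ i ≠ 0) (r : ι → ℝ) :
    Real.log (∏ i, (√(2 * π * σ i ^ 2))⁻¹ * Real.exp (-(r i) ^ 2 / (2 * σ i ^ 2)))
      = ∑ i, (Real.log (√(2 * π * σ i ^ 2))⁻¹ + -(r i) ^ 2 / (2 * σ i ^ 2)) := by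
  have hnorm : ∀ i, (√(2 * π * σ i ^ 2))⁻¹ ≠ 0 := fun i => by
    have : 0 < 2 * π * σ i ^ 2 := by have := hσ i; positivity
    positivity
  rw [Real.log_prod fun i _ => mul_ne_zero (hnorm i) (Real.exp_ne_zero _)]
  exact Finset.sum_congr rfl fun i _ => by
    rw [Real.log_mul (hnorm i) (Real.exp_ne_zero _), Real.log_exp]

section LeafDirection

variable {ι : Type*} [DecidableEq ι] {f : ι → (ι → ℝ) → ℝ} {k : ι}

theorem residual_add_smul_single
    (hinv : ∀ i (w : ι → ℝ) (t : ℝ), f i (w + t • Pi.single k 1) = f i w)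
    (i : ι) (w : ι → ℝ) (t : ℝ) :
    (w + t • Pi.single k 1 : ι → ℝ) i - f i (w + t • Pi.single k 1)
      = (w i - f i w) + t * (Pi.single k 1 : ι → ℝ) i := by
  rw [hinv]; simp only [Pi.add_apply, Pi.smul_apply, smul_eq_mul]; ring

theorem fderiv_gaussianLogDensity_apply_single [Fintype ι] (c σ : ι → ℝ)
    (hf : ∀ i, Differentiable ℝ (f i))
    (hinv : ∀ i (w : ι → ℝ) (t : ℝ), f i (w + t • Pi.single k 1) = f i w)
    (w : ι → ℝ) :
    fderiv ℝ (fun z => ∑ i, (c i + -(z i - f i z) ^ 2 / (2 * σ i ^ 2))) w (Pi.single k 1)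
      = -(w k - f k w) / σ k ^ 2 := by
  have hterm : ∀ i (e : ℝ),
      HasDerivAt (fun t => c i + -((w i - f i w) + t * e) ^ 2 / (2 * σ i ^ 2))
        (-((w i - f i w) * e) / σ i ^ 2) 0 := fun i e => by
    refine ((((hasDerivAt_mul_const (x := 0) e).const_add (w i - f i w)).pow 2).neg.div_const
      (2 * σ i ^ 2)).const_add (c i) |>.congr_deriv ?_
    push_cast
    ring
  refine (fderiv_apply_eq_of_hasDerivAt_line (by fun_prop)
    (fun t => by simp only [residual_add_smul_single hinv])
    (HasDerivAt.fun_sum (u := Finset.univ) fun i _ =>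
      hterm i ((Pi.single k 1 : ι → ℝ) i))).trans ?_
  simp [Pi.single_apply, apply_ite, ite_div]

theorem fderiv_neg_residual_div_apply_single [Fintype ι] (σ : ℝ) (hf : Differentiable ℝ (f k))
    (hinv : ∀ (w : ι → ℝ) (t : ℝ), f k (w + t • Pi.single k 1) = f k w) (z : ι → ℝ) :
    fderiv ℝ (fun w => -(w k - f k w) / σ ^ 2) z (Pi.single k 1) = -(1 / σ ^ 2) := by
  refine fderiv_apply_eq_of_hasDerivAt_line (by fun_prop) (fun t => ?_)
    (((hasDerivAt_id' 0).const_add (z k - f k z)).neg.div_const (σ ^ 2)) |>.trans (by ring)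
  simp only [hinv, Pi.add_apply, Pi.smul_apply, Pi.single_eq_same, smul_eq_mul, mul_one,
    Pi.neg_apply]
  ring

end LeafDirection

theorem stmt_14_general {n : ℕ}
    (pa : Fin n → Finset (Fin n))        -- parents in the DAG
    (f : Fin n → (Fin n → ℝ) → ℝ)
    (hf_smooth : ∀ i, ContDiff ℝ 2 (f i))
    (hf_pa : ∀ i, ∀ z z' : Fin n → ℝ, (∀ j ∈ pa i, z j = z' j) → f i z = f i z')
    (σ : Fin n → ℝ) (hσ : ∀ i, 0 < σ i)
    (p : (Fin n → ℝ) → ℝ)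
    (hp : ∀ z, p z = ∏ i, (Real.sqrt (2 * Real.pi * (σ i) ^ 2))⁻¹
        * Real.exp (-(z i - f i z) ^ 2 / (2 * (σ i) ^ 2)))
    (k : Fin n) (hleaf : ∀ i, k ∉ pa i) :
    (∀ z : Fin n → ℝ,
        fderiv ℝ (fun w => fderiv ℝ (fun y => Real.log (p y)) w (Pi.single k 1)) z
          (Pi.single k 1) = -(1 / (σ k) ^ 2))
      ∧ ∀ μ : Measure (Fin n → ℝ), IsProbabilityMeasure μ →
          variance (fun z =>
            fderiv ℝ (fun w => fderiv ℝ (fun y => Real.log (p y)) w (Pi.single k 1)) z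
              (Pi.single k 1)) μ = 0 := by
  have hdiff : ∀ i, Differentiable ℝ (f i) := fun i =>
    (hf_smooth i).differentiable (by norm_num)
  have hinv : ∀ i (w : Fin n → ℝ) (t : ℝ), f i (w + t • Pi.single k 1) = f i w :=
    fun i => apply_add_smul_single_eq_of_notMem (hf_pa i) (hleaf i)
  have hscore : (fun w => fderiv ℝ (fun y => Real.log (p y)) w (Pi.single k 1))
      = fun w => -(w k - f k w) / σ k ^ 2 := by
    funext w
    simp_rw [hp, log_prod_gaussian_density fun i => (hσ i).ne']
    exact fderiv_gaussianLogDensity_apply_single _ σ hdiff hinv w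
  have hhess : ∀ z : Fin n → ℝ,
      fderiv ℝ (fun w => fderiv ℝ (fun y => Real.log (p y)) w (Pi.single k 1)) z
        (Pi.single k 1) = -(1 / σ k ^ 2) := fun z => by
    rw [hscore]
    exact fderiv_neg_residual_div_apply_single _ (hdiff k) (hinv k) z
  refine ⟨hhess, fun μ _ => ?_⟩
  simp [hhess, variance, evariance]

/-- In a Gaussian additive-noise structural causal model over a DAG, if `k` is
a leaf node then the `k`-th diagonal entry of the Hessian of the log-density is
the constant `−1/σ_k²`; in particular its variance under any probability
measure is zero. -/
theorem stmt_14 {n : ℕ}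
    (pa : Fin n → Finset (Fin n))        -- parents in the DAG
    (ord : Fin n → ℕ)                    -- topological order witnessing acyclicity
    (hacyc : ∀ i, ∀ j ∈ pa i, ord j < ord i)
    (f : Fin n → (Fin n → ℝ) → ℝ)
    (hf_smooth : ∀ i, ContDiff ℝ 2 (f i))
    (hf_pa : ∀ i, ∀ z z' : Fin n → ℝ, (∀ j ∈ pa i, z j = z' j) → f i z = f i z')
    (σ : Fin n → ℝ) (hσ : ∀ i, 0 < σ i)
    (p : (Fin n → ℝ) → ℝ)
    (hp : ∀ z, p z = ∏ i, (Real.sqrt (2 * Real.pi * (σ i) ^ 2))⁻¹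
        * Real.exp (-(z i - f i z) ^ 2 / (2 * (σ i) ^ 2)))
    (k : Fin n) (hleaf : ∀ i, k ∉ pa i) :
    (∀ z : Fin n → ℝ,
        fderiv ℝ (fun w => fderiv ℝ (fun y => Real.log (p y)) w (Pi.single k 1)) z
          (Pi.single k 1) = -(1 / (σ k) ^ 2))
      ∧ ∀ μ : Measure (Fin n → ℝ), IsProbabilityMeasure μ →
          variance (fun z =>
            fderiv ℝ (fun w => fderiv ℝ (fun y => Real.log (p y)) w (Pi.single k 1)) z
              (Pi.single k 1)) μ = 0 :=
  stmt_14_general pa f hf_smooth hf_pa σ hσ p hp k hleaf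
end
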